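/- Logarithmic generator correctness. Let λ ∈ (0,1) and L := log(1/(1−λ)). Suppose N is a random variable with P(N = n) = (1−λ)λⁿ for all n ∈ ℕ, and A is an event with P(A | N = n) = 1/n for every n ≥ 1 and P(A | N = 0) = 0 (acceptance iff the first of the N auxiliary uniform variables is the maximum). Then P(N = n | A) = (1/L) · λⁿ/n for every n ≥ 1; that is, conditionally on acceptance, N has the logarithmic distribution of parameter λ. -/

import Mathlib

/-! Bayes' formula over the partition `{N = k}`: the joint weights are
`P(A, N = k) = (1 - λ) λᵏ / k` (zero at `k = 0`), and their total `P(A)` is `(1 - λ) L` by the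
Taylor series of `-log (1 - λ)`. Dividing gives `λⁿ / (n L)`. -/

open MeasureTheory ProbabilityTheory
open scoped ENNReal

namespace Real

lemma hasSum_taylorSeries_neg_log {x : ℝ} (hx : |x| < 1) :
    HasSum (fun n : ℕ => x ^ n / n) (-log (1 - x)) := by
  rw [← hasSum_nat_add_iff' 1]
  simpa using hasSum_pow_div_log_of_abs_lt_one hx

end Real

namespace ProbabilityTheory

variable {Ω α : Type*} [MeasurableSpace Ω] [MeasurableSpace α] [Countable α]
  [MeasurableSingletonClass α] {X : Ω → α}

lemma tsum_cond_mul_measure_fiber (hX : Measurable X) (μ : Measure Ω) [IsFiniteMeasure μ]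
    (t : Set Ω) : ∑' x, μ[t | X ⁻¹' {x}] * μ (X ⁻¹' {x}) = μ t := by
  have hfib : ∀ x, MeasurableSet (X ⁻¹' {x}) := fun x => hX (measurableSet_singleton x)
  calc ∑' x, μ[t | X ⁻¹' {x}] * μ (X ⁻¹' {x})
      = ∑' x : (Set.univ : Set α), μ.restrict t (X ⁻¹' {x.1}) := by
        rw [tsum_univ (f := fun x => μ.restrict t (X ⁻¹' {x}))]
        simp_rw [cond_mul_eq_inter (hfib _), Measure.restrict_apply (hfib _)]
    _ = μ t := by
        rw [tsum_measure_preimage_singleton Set.countable_univ fun x _ => hfib x]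
        simp

lemma cond_fiber_eq_div_tsum (hX : Measurable X) (μ : Measure Ω) [IsFiniteMeasure μ]
    {t : Set Ω} (ht : MeasurableSet t) (x : α) :
    μ[X ⁻¹' {x} | t] = μ[t | X ⁻¹' {x}] * μ (X ⁻¹' {x}) /
      ∑' y, μ[t | X ⁻¹' {y}] * μ (X ⁻¹' {y}) := by
  rw [tsum_cond_mul_measure_fiber hX, cond_eq_inv_mul_cond_mul ht (hX (measurableSet_singleton x)),
    mul_assoc, ENNReal.div_eq_inv_mul]

end ProbabilityTheory

/-- Logarithmic generator correctness.  If `N` is geometric, `P(N = n) = (1-λ)λⁿ`,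
and `A` is an acceptance event with `P(A | N = n) = 1/n` for `n ≥ 1` and
`P(A | N = 0) = 0`, then conditionally on `A`, `N` is logarithmic of parameter λ:
`P(N = n | A) = (1/L) λⁿ/n` for `n ≥ 1`, where `L = log (1/(1-λ))`. -/
theorem stmt7 {Ω : Type*} [MeasurableSpace Ω] (μ : Measure Ω) [IsProbabilityMeasure μ]
    (lam : ℝ) (hl0 : 0 < lam) (hl1 : lam < 1)
    (L : ℝ) (hL : L = Real.log (1 / (1 - lam)))
    (N : Ω → ℕ) (hN : Measurable N) (A : Set Ω) (hA : MeasurableSet A)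
    (hgeo : ∀ n : ℕ, μ {ω | N ω = n} = ENNReal.ofReal ((1 - lam) * lam ^ n))
    (hcond : ∀ n : ℕ, 1 ≤ n → μ[|{ω | N ω = n}] A = ((n : ℝ≥0∞))⁻¹)
    (hcond0 : μ[|{ω | N ω = 0}] A = 0) :
    ∀ n : ℕ, 1 ≤ n → μ[|A] {ω | N ω = n}
      = ENNReal.ofReal ((1 / L) * (lam ^ n / n)) := by
  have hq : 0 < 1 - lam := by linarith
  have hL' : L = -Real.log (1 - lam) := by rw [hL, one_div, Real.log_inv]
  have hLpos : 0 < L := hL' ▸ neg_pos.2 (Real.log_neg hq (by linarith))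
  have hjoint (k : ℕ) :
      μ[A | {ω | N ω = k}] * μ {ω | N ω = k} = ENNReal.ofReal ((1 - lam) * lam ^ k / k) := by
    rcases Nat.eq_zero_or_pos k with rfl | hk
    · simp [hcond0]
    · rw [hcond k hk, hgeo k, ENNReal.ofReal_div_of_pos (by positivity), ENNReal.ofReal_natCast,
        ENNReal.div_eq_inv_mul]
  have hA_eq : ∑' k, μ[A | {ω | N ω = k}] * μ {ω | N ω = k} = ENNReal.ofReal ((1 - lam) * L) := by
    have hsum := (Real.hasSum_taylorSeries_neg_log (abs_lt.2 ⟨by linarith, hl1⟩)).mul_left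
      (1 - lam)
    simp_rw [hjoint, mul_div_assoc]
    rw [← ENNReal.ofReal_tsum_of_nonneg (fun k => by positivity) hsum.summable, hsum.tsum_eq, hL']
  intro n hn
  calc μ[|A] {ω | N ω = n}
      = μ[A | {ω | N ω = n}] * μ {ω | N ω = n} / ∑' k, μ[A | {ω | N ω = k}] * μ {ω | N ω = k} :=
        cond_fiber_eq_div_tsum hN μ hA n
    _ = ENNReal.ofReal ((1 - lam) * lam ^ n / n) / ENNReal.ofReal ((1 - lam) * L) := by
        rw [hjoint, hA_eq]
    _ = ENNReal.ofReal ((1 / L) * (lam ^ n / n)) := by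
        rw [← ENNReal.ofReal_div_of_pos (by positivity)]
        congr 1
        field_simp [hq.ne']
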